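/- Let φᵢ, φⱼ : ℝ^d → ℝ be twice continuously differentiable, x₀ ∈ ℝ^d, and define A(t) = ∫_{ℝ^d} (4πt)^{−d/2} e^{−‖y−x₀‖²/(4t)} (φᵢ(y)−φᵢ(x₀))(φⱼ(y)−φⱼ(x₀)) dy for t > 0. If φᵢ and φⱼ are bounded with bounded first and second derivatives, then lim_{t→0⁺} A(t)/(2t) = ⟨∇φᵢ(x₀), ∇φⱼ(x₀)⟩. -/

import Mathlib

/-!
Substituting `y = x₀ + s • u` with `s = √(4t)` turns `A t / (2t)` into
`2 π^{-d/2} ∫ e^{-‖u‖²} Dₛφᵢ(u) Dₛφⱼ(u) du`, where `Dₛφ(u) = s⁻¹ (φ (x₀ + s • u) - φ x₀)` is a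
difference quotient. A bound on the first derivative makes `φ` Lipschitz, so `|Dₛφ(u)| ≤ C ‖u‖`
and dominated convergence lets `s → 0` inside the integral, where `Dₛφ(u) → ⟪∇φ(x₀), u⟫`. In an
orthonormal basis the Gaussian factorises, and the second moments
`∫ e^{-‖u‖²} uₖ uₗ du = δₖₗ π^{d/2} / 2` give `⟪∇φᵢ(x₀), ∇φⱼ(x₀)⟫` in the limit.
-/

open scoped RealInnerProductSpace NNReal
open MeasureTheory Real Filter Topology Module

lemma integrable_pow_mul_exp_neg_sq (n : ℕ) : Integrable fun x : ℝ => x ^ n * exp (-x ^ 2) := by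
  simpa using integrable_rpow_mul_exp_neg_mul_sq one_pos (neg_one_lt_zero.trans_le n.cast_nonneg)

lemma integral_mul_exp_neg_sq : ∫ x : ℝ, x * exp (-x ^ 2) = 0 := by
  have h := integral_neg_eq_self (fun x : ℝ => x * exp (-x ^ 2)) volume
  simp only [neg_mul, neg_sq, integral_neg] at h
  linarith

lemma integral_sq_mul_exp_neg_sq : ∫ x : ℝ, x ^ 2 * exp (-x ^ 2) = √π / 2 := by
  have h_even := integral_comp_abs (f := fun x : ℝ => x ^ 2 * exp (-x ^ 2))
  have h_half := integral_rpow_mul_exp_neg_rpow (p := 2) (q := 2) two_pos (by norm_num)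
  norm_num at h_even h_half
  rw [h_even, h_half, show (3 / 2 : ℝ) = 1 / 2 + 1 by norm_num, Gamma_add_one (by norm_num),
    Gamma_one_half_eq]
  ring

section Coordinates

variable {ι : Type*} [Fintype ι]

-- Writing `v k * v l` as a monomial `∏ i, v i ^ n i` lets Fubini factorise the integral.
lemma mul_mul_exp_neg_sum_sq_eq_prod [DecidableEq ι] (v : ι → ℝ) (k l : ι) :
    v k * v l * exp (-∑ i, v i ^ 2) =
      ∏ i, v i ^ ((if i = k then 1 else 0) + (if i = l then 1 else 0)) * exp (-v i ^ 2) := by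
  simp only [Finset.prod_mul_distrib, pow_add, pow_ite, pow_one, pow_zero,
    Finset.prod_ite_eq', Finset.mem_univ, if_true, ← exp_sum, Finset.sum_neg_distrib]

lemma integrable_mul_mul_exp_neg_sum_sq (k l : ι) :
    Integrable fun v : ι → ℝ => v k * v l * exp (-∑ i, v i ^ 2) := by
  classical
  simp only [mul_mul_exp_neg_sum_sq_eq_prod]
  exact Integrable.fintype_prod (f := fun i x => x ^ _ * exp (-x ^ 2))
    fun i => integrable_pow_mul_exp_neg_sq _

lemma integral_mul_mul_exp_neg_sum_sq [DecidableEq ι] (k l : ι) :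
    ∫ v : ι → ℝ, v k * v l * exp (-∑ i, v i ^ 2) =
      if k = l then √π ^ Fintype.card ι / 2 else 0 := by
  simp only [mul_mul_exp_neg_sum_sq_eq_prod]
  rw [integral_fintype_prod_volume_eq_prod (f := fun i x => x ^ _ * exp (-x ^ 2))]
  split_ifs with hkl
  · subst hkl
    rw [← Finset.mul_prod_erase _ _ (Finset.mem_univ k)]
    have h_gauss : ∫ x : ℝ, exp (-x ^ 2) = √π := by simpa using integral_gaussian 1
    have h_rest : ∀ i ∈ Finset.univ.erase k,
        ∫ x : ℝ, x ^ ((if i = k then 1 else 0) + (if i = k then 1 else 0)) * exp (-x ^ 2) = √π :=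
      fun i hi => by simpa [Finset.ne_of_mem_erase hi] using h_gauss
    rw [Finset.prod_congr rfl h_rest, Finset.prod_const,
      Finset.card_erase_of_mem (Finset.mem_univ k), Finset.card_univ,
      ← mul_pow_sub_one (Fintype.card_pos_iff.mpr ⟨k⟩).ne']
    simp [integral_sq_mul_exp_neg_sq, div_mul_eq_mul_div]
  · refine Finset.prod_eq_zero (Finset.mem_univ k) ?_
    simpa [hkl] using integral_mul_exp_neg_sq

end Coordinates

section InnerProductSpace

variable {ι : Type*} [Fintype ι]
variable {V : Type*} [NormedAddCommGroup V] [InnerProductSpace ℝ V]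

lemma OrthonormalBasis.inner_mul_inner_mul_exp_eq_sum (B : OrthonormalBasis ι ℝ V) (a b u : V) :
    ⟪a, u⟫ * ⟪b, u⟫ * exp (-‖u‖ ^ 2) =
      ∑ k, ∑ l, ⟪a, B k⟫ * ⟪b, B l⟫ * (⟪B k, u⟫ * ⟪B l, u⟫ * exp (-‖u‖ ^ 2)) := by
  rw [← B.sum_inner_mul_inner a u, ← B.sum_inner_mul_inner b u, Finset.sum_mul_sum,
    Finset.sum_mul]
  simp only [Finset.sum_mul]
  exact Finset.sum_congr rfl fun k _ => Finset.sum_congr rfl fun l _ => by ring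

lemma LipschitzWith.abs_slope_le {φ : V → ℝ} {K : ℝ≥0} (hφ : LipschitzWith K φ)
    (x₀ u : V) (s : ℝ) : |s⁻¹ * (φ (x₀ + s • u) - φ x₀)| ≤ K * ‖u‖ := by
  rcases eq_or_ne s 0 with rfl | hs
  · simp only [inv_zero, zero_mul, abs_zero]
    positivity
  have h := hφ.dist_le_mul (x₀ + s • u) x₀
  rw [Real.dist_eq, dist_eq_norm, add_sub_cancel_left, norm_smul, Real.norm_eq_abs] at h
  rw [abs_mul, abs_inv, inv_mul_le_iff₀ (abs_pos.mpr hs)]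
  linarith

lemma DifferentiableAt.tendsto_slope_inner_gradient [CompleteSpace V] {φ : V → ℝ} {x₀ : V}
    (hφ : DifferentiableAt ℝ φ x₀) (u : V) :
    Tendsto (fun s : ℝ => s⁻¹ * (φ (x₀ + s • u) - φ x₀)) (𝓝[≠] 0) (𝓝 ⟪gradient φ x₀, u⟫) := by
  rw [← InnerProductSpace.toDual_apply_apply, toDual_gradient]
  exact (hφ.hasFDerivAt.hasLineDerivAt u).tendsto_slope_zero

variable [MeasurableSpace V] [BorelSpace V]

@[simp]
lemma OrthonormalBasis.measurableEquiv_trans_toLp_symm_apply (B : OrthonormalBasis ι ℝ V)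
    (u : V) (i : ι) :
    B.measurableEquiv.trans (MeasurableEquiv.toLp 2 (ι → ℝ)).symm u i = ⟪B i, u⟫ := by
  simp [OrthonormalBasis.measurableEquiv, B.repr_apply_apply]

variable [FiniteDimensional ℝ V]

lemma OrthonormalBasis.measurePreserving_measurableEquiv_trans_toLp_symm
    (B : OrthonormalBasis ι ℝ V) :
    MeasurePreserving (B.measurableEquiv.trans (MeasurableEquiv.toLp 2 (ι → ℝ)).symm) :=
  (EuclideanSpace.volume_preserving_symm_measurableEquiv_toLp ι).comp
    B.measurePreserving_measurableEquiv

lemma OrthonormalBasis.integrable_inner_mul_inner_mul_exp_neg_norm_sq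
    (B : OrthonormalBasis ι ℝ V) (k l : ι) :
    Integrable fun u : V => ⟪B k, u⟫ * ⟪B l, u⟫ * exp (-‖u‖ ^ 2) := by
  have h := B.measurePreserving_measurableEquiv_trans_toLp_symm.integrable_comp_of_integrable
    (integrable_mul_mul_exp_neg_sum_sq k l)
  simpa [Function.comp_def, B.sum_sq_inner_right] using h

lemma OrthonormalBasis.integral_inner_mul_inner_mul_exp_neg_norm_sq [DecidableEq ι]
    (B : OrthonormalBasis ι ℝ V) (k l : ι) :
    ∫ u : V, ⟪B k, u⟫ * ⟪B l, u⟫ * exp (-‖u‖ ^ 2) =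
      if k = l then √π ^ Fintype.card ι / 2 else 0 := by
  rw [← integral_mul_mul_exp_neg_sum_sq k l,
    ← B.measurePreserving_measurableEquiv_trans_toLp_symm.integral_comp']
  simp [B.sum_sq_inner_right]

lemma integral_inner_mul_inner_mul_exp_neg_norm_sq (a b : V) :
    ∫ u : V, ⟪a, u⟫ * ⟪b, u⟫ * exp (-‖u‖ ^ 2) = √π ^ finrank ℝ V / 2 * ⟪a, b⟫ := by
  set B := stdOrthonormalBasis ℝ V
  simp_rw [B.inner_mul_inner_mul_exp_eq_sum a b]
  rw [integral_finsetSum _ fun k _ => integrable_finsetSum _ fun l _ =>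
    (B.integrable_inner_mul_inner_mul_exp_neg_norm_sq k l).const_mul _]
  simp_rw [integral_finsetSum _ fun l _ =>
    (B.integrable_inner_mul_inner_mul_exp_neg_norm_sq _ l).const_mul _, integral_const_mul,
    B.integral_inner_mul_inner_mul_exp_neg_norm_sq]
  simp [← B.sum_inner_mul_inner a b, Finset.mul_sum, real_inner_comm b, mul_comm]

lemma integrable_norm_sq_mul_exp_neg_norm_sq :
    Integrable fun u : V => ‖u‖ ^ 2 * exp (-‖u‖ ^ 2) := by
  set B := stdOrthonormalBasis ℝ V
  refine (integrable_finsetSum Finset.univ fun k _ =>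
    B.integrable_inner_mul_inner_mul_exp_neg_norm_sq k k).congr (ae_of_all _ fun u => ?_)
  simp only [← Finset.sum_mul, ← sq, B.sum_sq_inner_right]

lemma integral_heatKernel_mul_eq {t : ℝ} (ht : 0 < t) (x₀ : V) (g : V → ℝ) :
    ∫ y, (4 * π * t) ^ (-(finrank ℝ V : ℝ) / 2) * exp (-‖y - x₀‖ ^ 2 / (4 * t)) * g y =
      (√π ^ finrank ℝ V)⁻¹ * ∫ u, exp (-‖u‖ ^ 2) * g (x₀ + √(4 * t) • u) := by
  set s := √(4 * t)
  have hs : 0 < s := by positivity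
  have hs_sq : s ^ 2 = 4 * t := Real.sq_sqrt (by positivity)
  have h_const : (4 * π * t) ^ (-(finrank ℝ V : ℝ) / 2) =
      (s ^ finrank ℝ V * √π ^ finrank ℝ V)⁻¹ := by
    rw [Real.rpow_div_two_eq_sqrt _ (by positivity), Real.rpow_neg (by positivity),
      Real.rpow_natCast, ← mul_pow, ← Real.sqrt_mul (by positivity), mul_right_comm]
  have h_gauss (u : V) : exp (-‖s • u‖ ^ 2 / (4 * t)) = exp (-‖u‖ ^ 2) := by
    rw [norm_smul, Real.norm_of_nonneg hs.le, mul_pow, hs_sq]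
    field_simp
  rw [← integral_add_left_eq_self _ x₀]
  simp only [add_sub_cancel_left]
  have h_scale := Measure.integral_comp_smul_of_nonneg volume
    (fun z : V => (4 * π * t) ^ (-(finrank ℝ V : ℝ) / 2) * exp (-‖z‖ ^ 2 / (4 * t)) * g (x₀ + z))
    s (hR := hs.le)
  rw [eq_inv_smul_iff₀ (by positivity)] at h_scale
  rw [← h_scale, smul_eq_mul, ← integral_const_mul, ← integral_const_mul]
  congr 1 with u
  rw [h_gauss, h_const]
  field_simp

lemma tendsto_integral_slope_mul_slope_mul_exp_neg_norm_sq {φ ψ : V → ℝ} {x₀ : V} {K L : ℝ≥0}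
    (hφ : LipschitzWith K φ) (hψ : LipschitzWith L ψ)
    (hφx₀ : DifferentiableAt ℝ φ x₀) (hψx₀ : DifferentiableAt ℝ ψ x₀) :
    Tendsto (fun s : ℝ => ∫ u, s⁻¹ * (φ (x₀ + s • u) - φ x₀) * (s⁻¹ * (ψ (x₀ + s • u) - ψ x₀)) *
        exp (-‖u‖ ^ 2)) (𝓝[≠] 0)
      (𝓝 (√π ^ finrank ℝ V / 2 * ⟪gradient φ x₀, gradient ψ x₀⟫)) := by
  rw [← integral_inner_mul_inner_mul_exp_neg_norm_sq]
  refine tendsto_integral_filter_of_dominated_convergence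
    (fun u => K * L * (‖u‖ ^ 2 * exp (-‖u‖ ^ 2))) (Eventually.of_forall fun s => ?_)
    (Eventually.of_forall fun s => Eventually.of_forall fun u => ?_)
    (integrable_norm_sq_mul_exp_neg_norm_sq.const_mul _) (Eventually.of_forall fun u => ?_)
  · have := hφ.continuous
    have := hψ.continuous
    exact Continuous.aestronglyMeasurable (by fun_prop)
  · rw [Real.norm_eq_abs, abs_mul, abs_mul, abs_of_pos (exp_pos _)]
    calc _ ≤ K * ‖u‖ * (L * ‖u‖) * exp (-‖u‖ ^ 2) := by
          gcongr
          exacts [hφ.abs_slope_le x₀ u s, hψ.abs_slope_le x₀ u s]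
      _ = K * L * (‖u‖ ^ 2 * exp (-‖u‖ ^ 2)) := by ring
  · exact ((hφx₀.tendsto_slope_inner_gradient u).mul
      (hψx₀.tendsto_slope_inner_gradient u)).mul_const _

end InnerProductSpace

lemma tendsto_sqrt_const_mul_nhdsGT_nhdsNE {c : ℝ} (hc : 0 < c) :
    Tendsto (fun t : ℝ => √(c * t)) (𝓝[>] 0) (𝓝[≠] 0) := by
  refine tendsto_nhdsWithin_iff.mpr ⟨?_, ?_⟩
  · exact ((by fun_prop : Continuous fun t : ℝ => √(c * t)).tendsto' 0 0 (by simp)).mono_left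
      nhdsWithin_le_nhds
  · filter_upwards [self_mem_nhdsWithin] with t (ht : 0 < t)
    exact (Real.sqrt_pos.mpr (by positivity)).ne'

lemma lipschitzWith_of_norm_fderiv_le {V G : Type*} [NormedAddCommGroup V] [NormedSpace ℝ V]
    [NormedAddCommGroup G] [NormedSpace ℝ G] {φ : V → G} {C : ℝ} (hφ : Differentiable ℝ φ) (h : ∀ x, ‖fderiv ℝ φ x‖ ≤ C) :
    LipschitzWith C.toNNReal φ :=
  lipschitzWith_of_nnnorm_fderiv_le hφ fun x => by simpa using Real.toNNReal_le_toNNReal (h x)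

/-- Euclidean version of Theorem 2.2: for bounded `C²` functions `φᵢ, φⱼ` with
bounded first and second derivatives, the heat-kernel local correlation
`A(t) = ∫ (4πt)^{-d/2} e^{-‖y-x₀‖²/(4t)} (φᵢ y - φᵢ x₀)(φⱼ y - φⱼ x₀) dy`
satisfies `lim_{t→0⁺} A(t)/(2t) = ⟨∇φᵢ(x₀), ∇φⱼ(x₀)⟩`. -/
theorem scaled_local_correlation_tendsto_inner_gradients {d : ℕ}
    (φi φj : EuclideanSpace ℝ (Fin d) → ℝ) (x₀ : EuclideanSpace ℝ (Fin d))
    (hφi : ContDiff ℝ 2 φi) (hφj : ContDiff ℝ 2 φj)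
    (Ci : ℝ) (hCi : ∀ x, |φi x| ≤ Ci ∧ ‖fderiv ℝ φi x‖ ≤ Ci ∧ ‖iteratedFDeriv ℝ 2 φi x‖ ≤ Ci)
    (Cj : ℝ) (hCj : ∀ x, |φj x| ≤ Cj ∧ ‖fderiv ℝ φj x‖ ≤ Cj ∧ ‖iteratedFDeriv ℝ 2 φj x‖ ≤ Cj)
    (A : ℝ → ℝ)
    (hA : ∀ t, A t = ∫ y : EuclideanSpace ℝ (Fin d),
        (4 * π * t) ^ (-(d : ℝ) / 2) * Real.exp (-‖y - x₀‖ ^ 2 / (4 * t)) *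
          ((φi y - φi x₀) * (φj y - φj x₀))) :
    Tendsto (fun t => A t / (2 * t)) (nhdsWithin 0 (Set.Ioi 0))
      (nhds ⟪gradient φi x₀, gradient φj x₀⟫) := by
  have hdi := hφi.differentiable two_ne_zero
  have hdj := hφj.differentiable two_ne_zero
  have h_lim := ((tendsto_integral_slope_mul_slope_mul_exp_neg_norm_sq
    (lipschitzWith_of_norm_fderiv_le hdi fun x => (hCi x).2.1)
    (lipschitzWith_of_norm_fderiv_le hdj fun x => (hCj x).2.1) (hdi x₀) (hdj x₀)).comp
    (tendsto_sqrt_const_mul_nhdsGT_nhdsNE four_pos)).const_mul (2 / √π ^ d)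
  have h_value : 2 / √π ^ d * (√π ^ d / 2 * ⟪gradient φi x₀, gradient φj x₀⟫) =
      ⟪gradient φi x₀, gradient φj x₀⟫ := by
    field_simp
  rw [finrank_euclideanSpace_fin, h_value] at h_lim
  refine h_lim.congr' ?_
  filter_upwards [self_mem_nhdsWithin] with t (ht : 0 < t)
  have h_rescale := integral_heatKernel_mul_eq ht x₀ fun y => (φi y - φi x₀) * (φj y - φj x₀)
  rw [finrank_euclideanSpace_fin] at h_rescale
  have hs_sq : √(4 * t) ^ 2 = 4 * t := Real.sq_sqrt (by positivity)
  rw [hA t, h_rescale, Function.comp_apply, ← integral_const_mul, ← integral_const_mul,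
    ← integral_div]
  congr 1 with u
  field_simp
  rw [hs_sq]
  ring
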